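/- arXiv:1810.12577 — 2 statements merged into one kernel-verified Lean document; each statement's English description precedes it below -/
import Mathlib

section
/- With A(ψ) the (1|1)-dimensional module over the Neveu–Schwarz positive part SVir_{1/2}⁺ as above, A(ψ) is a simple module if and only if ψ is nontrivial (i.e., ψ(L_1) ≠ 0 or ψ(L_2) ≠ 0). -/
/-!
Write `w = (1, 0)` and `u = (0, 1)`. A nonzero graded submodule contains `w` or `u`; since
`G_{1/2} w = u`, it is everything as soon as it contains `w`. From `u` one gets back to `w` by
`G_{1/2} u = ψ(L_1) w` or `G_{3/2} u = 2 ψ(L_2) w`, so for nontrivial `ψ` the module is simple.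
Conversely `[G_{3/2}, G_{k-1/2}] = 2 L_{k+1}` forces `ψ(L_k) = 0` for `k ≥ 3`, so for trivial `ψ`
the odd line `ℂu` is a proper nonzero submodule.
-/

noncomputable section

/-- The action of `L_n` on `A(ψ) = ℂw ⊕ ℂu` (`w = (1,0)` even, `u = (0,1)` odd). -/
def aL (ψL : ℤ → ℂ) (n : ℤ) : Module.End ℂ (ℂ × ℂ) := ψL n • (LinearMap.id)

/-- The action of `G_{k−1/2}` (`k ≥ 1`) on `A(ψ)`: `G_{1/2}·w = u`, `G_{1/2}·u = ψ(L_1)w`,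
and for `k ≥ 2`: `G_{k−1/2}·w = 0`, `G_{k−1/2}·u = 2ψ(L_k)w`. -/
def aG (ψL : ℤ → ℂ) (k : ℤ) : Module.End ℂ (ℂ × ℂ) :=
  LinearMap.prod
    ((if k = 1 then ψL 1 else 2 * ψL k) • LinearMap.snd ℂ ℂ ℂ)
    ((if k = 1 then (1 : ℂ) else 0) • LinearMap.fst ℂ ℂ ℂ)

/-- The even part `ℂw` of `A(ψ)`. -/
def evenPart : Submodule ℂ (ℂ × ℂ) := Submodule.prod ⊤ ⊥

/-- The odd part `ℂu` of `A(ψ)`. -/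
def oddPart : Submodule ℂ (ℂ × ℂ) := Submodule.prod ⊥ ⊤

section DivisionRing

variable {K : Type*} [DivisionRing K] {W : Submodule K (K × K)}

lemma eq_top_of_inl_one_mem_of_inr_one_mem (hw : ((1 : K), (0 : K)) ∈ W)
    (hu : ((0 : K), (1 : K)) ∈ W) : W = ⊤ := by
  refine eq_top_iff.mpr fun v _ => ?_
  have hv : v = v.1 • ((1 : K), (0 : K)) + v.2 • ((0 : K), (1 : K)) := by simp
  rw [hv]
  exact W.add_mem (W.smul_mem _ hw) (W.smul_mem _ hu)

lemma inl_one_mem_of_inl_mem {c : K} (hc : c ≠ 0) (h : (c, (0 : K)) ∈ W) :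
    ((1 : K), (0 : K)) ∈ W := by
  rw [← W.smul_mem_iff hc]
  simpa using h

lemma inr_one_mem_of_inr_mem {c : K} (hc : c ≠ 0) (h : ((0 : K), c) ∈ W) :
    ((0 : K), (1 : K)) ∈ W := by
  rw [← W.smul_mem_iff hc]
  simpa using h

end DivisionRing

lemma aL_mem (ψL : ℤ → ℂ) (n : ℤ) {W : Submodule ℂ (ℂ × ℂ)} {v : ℂ × ℂ} (hv : v ∈ W) :
    aL ψL n v ∈ W :=
  W.smul_mem _ hv

lemma aG_one_apply_inl (ψL : ℤ → ℂ) : aG ψL 1 ((1 : ℂ), (0 : ℂ)) = (0, 1) := by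
  simp [aG]

lemma aG_one_apply_inr (ψL : ℤ → ℂ) : aG ψL 1 ((0 : ℂ), (1 : ℂ)) = (ψL 1, 0) := by
  simp [aG]

lemma aG_apply_inr_of_ne_one (ψL : ℤ → ℂ) {k : ℤ} (hk : k ≠ 1) :
    aG ψL k ((0 : ℂ), (1 : ℂ)) = (2 * ψL k, 0) := by
  simp [aG, hk]

lemma mem_evenPart {x : ℂ × ℂ} : x ∈ evenPart ↔ x.2 = 0 := by
  simp [evenPart, Submodule.mem_prod]

lemma mem_oddPart {x : ℂ × ℂ} : x ∈ oddPart ↔ x.1 = 0 := by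
  simp [oddPart, Submodule.mem_prod]

lemma inl_one_mem_or_inr_one_mem_of_ne_bot {W : Submodule ℂ (ℂ × ℂ)}
    (hgrad : W = (W ⊓ evenPart) ⊔ (W ⊓ oddPart)) (hW : W ≠ ⊥) :
    ((1 : ℂ), (0 : ℂ)) ∈ W ∨ ((0 : ℂ), (1 : ℂ)) ∈ W := by
  have hpiece : W ⊓ evenPart ≠ ⊥ ∨ W ⊓ oddPart ≠ ⊥ := by
    by_contra! h
    rw [h.1, h.2, sup_idem] at hgrad
    exact hW hgrad
  rcases hpiece with heven | hodd
  · obtain ⟨x, ⟨hxW, hx2⟩, hx⟩ := Submodule.exists_mem_ne_zero_of_ne_bot heven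
    rw [SetLike.mem_coe, mem_evenPart] at hx2
    have hx1 : x.1 ≠ 0 := fun h => hx (Prod.ext h hx2)
    exact Or.inl (inl_one_mem_of_inl_mem hx1 (by rwa [← hx2]))
  · obtain ⟨x, ⟨hxW, hx1⟩, hx⟩ := Submodule.exists_mem_ne_zero_of_ne_bot hodd
    rw [SetLike.mem_coe, mem_oddPart] at hx1
    have hx2 : x.2 ≠ 0 := fun h => hx (Prod.ext hx1 h)
    exact Or.inr (inr_one_mem_of_inr_mem hx2 (by rwa [← hx1]))

lemma eq_bot_or_eq_top_of_ne_zero {ψL : ℤ → ℂ} (hψ : ψL 1 ≠ 0 ∨ ψL 2 ≠ 0)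
    {W : Submodule ℂ (ℂ × ℂ)} (hG : ∀ k : ℤ, 1 ≤ k → ∀ v ∈ W, aG ψL k v ∈ W)
    (hgrad : W = (W ⊓ evenPart) ⊔ (W ⊓ oddPart)) : W = ⊥ ∨ W = ⊤ := by
  have hw_of_hu : ((0 : ℂ), (1 : ℂ)) ∈ W → ((1 : ℂ), (0 : ℂ)) ∈ W := fun hu => by
    rcases hψ with h1 | h2
    · exact inl_one_mem_of_inl_mem h1 (aG_one_apply_inr ψL ▸ hG 1 le_rfl _ hu)
    · exact inl_one_mem_of_inl_mem (mul_ne_zero two_ne_zero h2)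
        (aG_apply_inr_of_ne_one ψL (k := 2) (by decide) ▸ hG 2 (by decide) _ hu)
  have hu_of_hw : ((1 : ℂ), (0 : ℂ)) ∈ W → ((0 : ℂ), (1 : ℂ)) ∈ W := fun hw =>
    aG_one_apply_inl ψL ▸ hG 1 le_rfl _ hw
  by_cases hW : W = ⊥
  · exact Or.inl hW
  right
  rcases inl_one_mem_or_inr_one_mem_of_ne_bot hgrad hW with hw | hu
  · exact eq_top_of_inl_one_mem_of_inr_one_mem hw (hu_of_hw hw)
  · exact eq_top_of_inl_one_mem_of_inr_one_mem (hw_of_hu hu) hu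

lemma eq_zero_of_three_le {ψL : ℤ → ℂ}
    (hGG : ∀ k l : ℤ, 2 ≤ k → 2 ≤ l → (2 : ℂ) * ψL (k + l - 1) = 0) {k : ℤ} (hk : 3 ≤ k) :
    ψL k = 0 := by
  have h := hGG 2 (k - 1) le_rfl (by omega)
  rwa [show 2 + (k - 1) - 1 = k by ring, mul_eq_zero, or_iff_right two_ne_zero] at h

lemma aG_mem_oddPart {ψL : ℤ → ℂ} (hψ : ∀ k : ℤ, 1 ≤ k → ψL k = 0) {k : ℤ} (hk : 1 ≤ k)
    (v : ℂ × ℂ) : aG ψL k v ∈ oddPart := by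
  rw [mem_oddPart]
  simp [aG, hψ k hk, hψ 1 le_rfl]

lemma oddPart_isGraded : oddPart = (oddPart ⊓ evenPart) ⊔ (oddPart ⊓ oddPart) := by
  have hdisj : oddPart ⊓ evenPart = ⊥ := by
    refine eq_bot_iff.mpr fun x ⟨hodd, heven⟩ => ?_
    rw [SetLike.mem_coe, mem_oddPart] at hodd
    rw [SetLike.mem_coe, mem_evenPart] at heven
    exact (Submodule.mem_bot ℂ).mpr (Prod.ext hodd heven)
  rw [hdisj, inf_idem, bot_sup_eq]

lemma oddPart_ne_bot : oddPart ≠ ⊥ := fun h => by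
  have hu : ((0 : ℂ), (1 : ℂ)) ∈ oddPart := mem_oddPart.mpr rfl
  simp [h] at hu

lemma oddPart_ne_top : oddPart ≠ ⊤ := fun h => by
  have hw : ((1 : ℂ), (0 : ℂ)) ∉ oddPart := by simp [mem_oddPart]
  simp [h] at hw

theorem whittaker_stmt7_general (ψL : ℤ → ℂ)
    (hGG : ∀ k l : ℤ, 2 ≤ k → 2 ≤ l → (2 : ℂ) * ψL (k + l - 1) = 0) :
    (∀ W : Submodule ℂ (ℂ × ℂ),
      (∀ n : ℤ, 1 ≤ n → ∀ v ∈ W, aL ψL n v ∈ W) →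
      (∀ k : ℤ, 1 ≤ k → ∀ v ∈ W, aG ψL k v ∈ W) →
      W = (W ⊓ evenPart) ⊔ (W ⊓ oddPart) → W = ⊥ ∨ W = ⊤)
    ↔ (ψL 1 ≠ 0 ∨ ψL 2 ≠ 0) := by
  refine ⟨fun hsimple => ?_, fun hψ W _ hG hgrad => eq_bot_or_eq_top_of_ne_zero hψ hG hgrad⟩
  by_contra! htriv
  have hvanish : ∀ k : ℤ, 1 ≤ k → ψL k = 0 := fun k hk => by
    rcases (by omega : k = 1 ∨ k = 2 ∨ 3 ≤ k) with rfl | rfl | h3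
    exacts [htriv.1, htriv.2, eq_zero_of_three_le hGG h3]
  rcases hsimple oddPart (fun n _ _ hv => aL_mem ψL n hv)
    (fun k hk v _ => aG_mem_oddPart hvanish hk v) oddPart_isGraded with h | h
  exacts [oddPart_ne_bot h, oddPart_ne_top h]

/-- With `A(ψ)` the `(1|1)`-dimensional module over the Neveu–Schwarz
positive part `SVir_{1/2}⁺` as above (`ψ : p_{1/2} → ℂ` a Lie superalgebra homomorphism),
`A(ψ)` is a simple module — i.e. it has no graded invariant subspace other than `0` and the
whole space — if and only if `ψ` is nontrivial, i.e. `ψ(L_1) ≠ 0` or `ψ(L_2) ≠ 0`. -/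
theorem whittaker_stmt7 (ψL ψG : ℤ → ℂ)
    (hLL : ∀ m n : ℤ, 1 ≤ m → 1 ≤ n → ((m : ℂ) - (n : ℂ)) * ψL (m + n) = 0)
    (hLG : ∀ m k : ℤ, 1 ≤ m → 2 ≤ k → ((m : ℂ)/2 - ((k : ℂ) - 1/2)) * ψG (m + k) = 0)
    (hGG : ∀ k l : ℤ, 2 ≤ k → 2 ≤ l → (2 : ℂ) * ψL (k + l - 1) = 0)
    (hparity : ∀ k : ℤ, 2 ≤ k → ψG k = 0) :
    (∀ W : Submodule ℂ (ℂ × ℂ),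
      (∀ n : ℤ, 1 ≤ n → ∀ v ∈ W, aL ψL n v ∈ W) →
      (∀ k : ℤ, 1 ≤ k → ∀ v ∈ W, aG ψL k v ∈ W) →
      W = (W ⊓ evenPart) ⊔ (W ⊓ oddPart) → W = ⊥ ∨ W = ⊤)
    ↔ (ψL 1 ≠ 0 ∨ ψL 2 ≠ 0) :=
  whittaker_stmt7_general ψL hGG
end
end

section
/- Let V be a finite-dimensional module over the Lie algebra Vir⁺ (basis L_n, n ≥ 1, [L_m,L_n] = (m−n)L_{m+n}), and let w ∈ V satisfy L_n w = c_n w for all n ≥ 1 with c_n ∈ ℂ. Suppose u_0, u_1, u_2, ... ∈ V satisfy L_n u_i = c_n u_i + (n/2 − i − 1/2) u_{n+i} for all n ≥ 1, i ≥ 0. If a nontrivial finite linear relation a_{i_1}u_{i_1} + ... + a_{i_p}u_{i_p} = 0 holds with all a_{i_j} ≠ 0 and i_1 < ... < i_p, then p = 1, i.e., some u_m = 0. -/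
/-!
Applying `L_n - c_n` with `n = 2m + 1` to a relation `∑ a_i u_i = 0` gives the relation
`∑ a_i (m - i) u_{n+i} = 0`, whose term for `i = m` vanishes while all others survive. Taking
`m` in the support of a minimal relation of length `p ≥ 2` thus yields one of length `p - 1`.
-/

open Finset

section Relations

variable {R V : Type*} [CommRing R] [AddCommGroup V] [Module R V]

theorem sum_smul_eq_zero_of_apply_eq {ι : Type*} (T : Module.End R V) (μ : R) (u v : ι → V)
    (β : ι → R) (hT : ∀ i, T (u i) = μ • u i + β i • v i) {s : Finset ι} {a : ι → R}
    (h : ∑ i ∈ s, a i • u i = 0) : ∑ i ∈ s, (a i * β i) • v i = 0 :=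
  calc ∑ i ∈ s, (a i * β i) • v i = ∑ i ∈ s, a i • (T (u i) - μ • u i) := by
        simp only [hT, add_sub_cancel_left, mul_smul]
    _ = T (∑ i ∈ s, a i • u i) - μ • ∑ i ∈ s, a i • u i := by
        simp only [map_sum, map_smul, smul_sum, smul_sub, smul_comm μ, sum_sub_distrib]
    _ = 0 := by rw [h, map_zero, smul_zero, sub_zero]

theorem exists_relation_of_sum_comp_embedding_eq_zero {ι κ : Type*} (e : ι ↪ κ) (u : κ → V)
    {s : Finset ι} {b : ι → R} (hb : ∀ i ∈ s, b i ≠ 0) (h : ∑ i ∈ s, b i • u (e i) = 0) :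
    ∃ t : Finset κ, t.card = s.card ∧
      ∃ b' : κ → R, (∀ j ∈ t, b' j ≠ 0) ∧ ∑ j ∈ t, b' j • u j = 0 := by
  classical
  have hextend : ∀ i, Function.extend e b 0 (e i) = b i :=
    e.injective.extend_apply b 0
  refine ⟨s.map e, card_map e, Function.extend e b 0, ?_, ?_⟩
  · simpa only [forall_mem_map, hextend] using hb
  · simpa only [sum_map, hextend] using h

end Relations

theorem whittaker_stmt10_general (V : Type*) [AddCommGroup V] [Module ℂ V]
    (ρ : ℤ → Module.End ℂ V) (c : ℤ → ℂ)
    (u : ℕ → V)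
    (hu : ∀ n : ℕ, 1 ≤ n → ∀ i : ℕ,
      ρ (n : ℤ) (u i) = c (n : ℤ) • u i + ((n : ℂ)/2 - (i : ℂ) - 1/2) • u (n + i))
    (s : Finset ℕ) (hne : s.Nonempty) (a : ℕ → ℂ)
    (ha : ∀ i ∈ s, a i ≠ 0)
    (hzero : ∑ i ∈ s, a i • u i = 0)
    (hmin : ∀ t : Finset ℕ, t.Nonempty → ∀ b : ℕ → ℂ,
      (∀ i ∈ t, b i ≠ 0) → ∑ i ∈ t, b i • u i = 0 → s.card ≤ t.card) :
    s.card = 1 := by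
  obtain ⟨m, hm⟩ := hne
  have hL : ∀ i, ρ ((2 * m + 1 : ℕ) : ℤ) (u i) =
      c ((2 * m + 1 : ℕ) : ℤ) • u i + ((m : ℂ) - i) • u (2 * m + 1 + i) := fun i => by
    rw [hu _ (by omega) i]
    congr 2
    push_cast
    ring
  have hshifted := sum_smul_eq_zero_of_apply_eq _ _ u _ _ hL hzero
  rw [← sum_erase s (by simp : (a m * ((m : ℂ) - m)) • u (2 * m + 1 + m) = 0)] at hshifted
  have hcoeff : ∀ i ∈ s.erase m, a i * ((m : ℂ) - i) ≠ 0 := fun i hi =>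
    mul_ne_zero (ha i (mem_of_mem_erase hi))
      (sub_ne_zero.2 (Nat.cast_injective.ne (ne_of_mem_erase hi).symm))
  obtain ⟨t, ht, b, hb, hbt⟩ := exists_relation_of_sum_comp_embedding_eq_zero
    (addLeftEmbedding (2 * m + 1)) u hcoeff hshifted
  rw [card_erase_of_mem hm] at ht
  have hpos : 0 < s.card := card_pos.2 ⟨m, hm⟩
  by_contra hcard
  have := hmin t (card_pos.1 (by omega)) b hb hbt
  omega

/-- Let `V` be a finite-dimensional module over `Vir⁺` (operators `ρ n` for
`n ≥ 1` with `[L_m, L_n] = (m−n)L_{m+n}`), and let `w ∈ V` satisfy `L_n w = c_n w` for all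
`n ≥ 1`.  Suppose `u_0, u_1, u_2, … ∈ V` satisfy
`L_n u_i = c_n u_i + (n/2 − i − 1/2) u_{n+i}` for all `n ≥ 1`, `i ≥ 0`.  If a nontrivial
finite linear relation `a_{i_1}u_{i_1} + ⋯ + a_{i_p}u_{i_p} = 0` with all coefficients
nonzero holds, then the minimal length of such a relation is `p = 1`, i.e. some `u_m = 0`. -/
theorem whittaker_stmt10 (V : Type*) [AddCommGroup V] [Module ℂ V] [FiniteDimensional ℂ V]
    (ρ : ℤ → Module.End ℂ V) (c : ℤ → ℂ)
    (hrel : ∀ m n : ℤ, 1 ≤ m → 1 ≤ n →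
      ρ m * ρ n - ρ n * ρ m = (((m : ℂ) - (n : ℂ))) • ρ (m + n))
    (w : V) (hw : ∀ n : ℤ, 1 ≤ n → ρ n w = c n • w)
    (u : ℕ → V)
    (hu : ∀ n : ℕ, 1 ≤ n → ∀ i : ℕ,
      ρ (n : ℤ) (u i) = c (n : ℤ) • u i + ((n : ℂ)/2 - (i : ℂ) - 1/2) • u (n + i))
    (s : Finset ℕ) (hne : s.Nonempty) (a : ℕ → ℂ)
    (ha : ∀ i ∈ s, a i ≠ 0)
    (hzero : ∑ i ∈ s, a i • u i = 0)
    (hmin : ∀ t : Finset ℕ, t.Nonempty → ∀ b : ℕ → ℂ,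
      (∀ i ∈ t, b i ≠ 0) → ∑ i ∈ t, b i • u i = 0 → s.card ≤ t.card) :
    s.card = 1 :=
  whittaker_stmt10_general V ρ c u hu s hne a ha hzero hmin
end
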